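/- arXiv:2210.15035 — 2 statements merged into one kernel-verified Lean document; each statement's English description precedes it below -/
import Mathlib

section
/- Let b^D > b^N > 0, α > b^D, β > 0, and define the logistic dissatisfaction f(x) = α / (1 + exp(β(2x - 1))) for x ∈ [0,1]. Suppose f(1) < b^D - b^N. Then there exists a unique x̂ ∈ (0,1) such that f(x̂) = b^D - b^N x̂, and moreover f(x) > b^D - b^N x for all x ∈ [0, x̂) and f(x) < b^D - b^N x for all x ∈ (x̂, 1]. -/
open Real Set

lemma sigma_hasDerivAt (t : ℝ) :
    HasDerivAt (fun t => (1 + Real.exp t)⁻¹) (-Real.exp t / (1 + Real.exp t)^2) t := by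
  have h : HasDerivAt (fun t => 1 + Real.exp t) (Real.exp t) t := (Real.hasDerivAt_exp t).const_add 1
  exact h.inv (by positivity)

lemma sigma_deriv : deriv (fun t => (1 + Real.exp t)⁻¹) =
    fun t => -Real.exp t / (1 + Real.exp t)^2 :=
  funext fun t => (sigma_hasDerivAt t).deriv

lemma sigma'_hasDerivAt (t : ℝ) :
    HasDerivAt (fun t => -Real.exp t / (1 + Real.exp t)^2)
      (Real.exp t * (Real.exp t - 1) / (1 + Real.exp t)^3) t := by
  have h1 : HasDerivAt (fun t => -Real.exp t) (-Real.exp t) t := (Real.hasDerivAt_exp t).neg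
  have h2 : HasDerivAt (fun t => (1 + Real.exp t)^2) (2 * (1 + Real.exp t) * Real.exp t) t := by
    have h : HasDerivAt (fun t => 1 + Real.exp t) (Real.exp t) t := (Real.hasDerivAt_exp t).const_add 1
    have hp : HasDerivAt (fun t => (1 + Real.exp t)^2) _ t := h.pow 2
    convert hp using 1
    norm_num
  have hne : (1 + Real.exp t)^2 ≠ 0 := by positivity
  have : HasDerivAt (fun t => -Real.exp t / (1 + Real.exp t)^2) _ t := h1.div h2 hne
  convert this using 1
  have h3 : (0:ℝ) < 1 + Real.exp t := by positivity
  field_simp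
  ring

lemma sigma_deriv2 (t : ℝ) : deriv^[2] (fun t => (1 + Real.exp t)⁻¹) t
    = Real.exp t * (Real.exp t - 1) / (1 + Real.exp t)^3 := by
  show deriv (deriv (fun t => (1 + Real.exp t)⁻¹)) t = _
  rw [sigma_deriv]
  exact (sigma'_hasDerivAt t).deriv

lemma sigma_convexOn : ConvexOn ℝ (Set.Ici (0:ℝ)) (fun t => (1 + Real.exp t)⁻¹) := by
  apply convexOn_of_deriv2_nonneg' (convex_Ici 0)
  · exact fun x _ => (sigma_hasDerivAt x).differentiableAt.differentiableWithinAt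
  · rw [sigma_deriv]
    exact fun x _ => (sigma'_hasDerivAt x).differentiableAt.differentiableWithinAt
  · intro x hx
    rw [sigma_deriv2]
    have h1 : (1:ℝ) ≤ Real.exp x := Real.one_le_exp hx
    have h3 : (0:ℝ) < 1 + Real.exp x := by positivity
    have h4 : (0:ℝ) ≤ Real.exp x - 1 := by linarith
    positivity

lemma sigma_concaveOn : ConcaveOn ℝ (Set.Iic (0:ℝ)) (fun t => (1 + Real.exp t)⁻¹) := by
  apply concaveOn_of_deriv2_nonpos' (convex_Iic 0)
  · exact fun x _ => (sigma_hasDerivAt x).differentiableAt.differentiableWithinAt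
  · rw [sigma_deriv]
    exact fun x _ => (sigma'_hasDerivAt x).differentiableAt.differentiableWithinAt
  · intro x hx
    rw [sigma_deriv2]
    have h1 : Real.exp x ≤ 1 := Real.exp_le_one_iff.mpr hx
    have h3 : (0:ℝ) < 1 + Real.exp x := by positivity
    have h2 : (0:ℝ) < Real.exp x := Real.exp_pos x
    apply div_nonpos_of_nonpos_of_nonneg
    · nlinarith
    · positivity

lemma convex_comb {s : Set ℝ} {g : ℝ → ℝ} (hg : ConvexOn ℝ s g) {u v p : ℝ}
    (hu : u ∈ s) (hv : v ∈ s) (h1 : u < p) (h2 : p < v) :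
    g p ≤ ((v - p)/(v - u)) * g u + ((p - u)/(v - u)) * g v := by
  have huv : (0:ℝ) < v - u := by linarith
  have ha : (0:ℝ) ≤ (v - p)/(v - u) := div_nonneg (by linarith) (by linarith)
  have hb : (0:ℝ) ≤ (p - u)/(v - u) := div_nonneg (by linarith) (by linarith)
  have hab : (v - p)/(v - u) + (p - u)/(v - u) = 1 := by
    rw [← add_div, div_eq_one_iff_eq huv.ne']; ring
  have := hg.2 hu hv ha hb hab
  simp only [smul_eq_mul] at this
  have hc : (v - p)/(v - u) * u + (p - u)/(v - u) * v = p := by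
    rw [div_mul_eq_mul_div, div_mul_eq_mul_div, ← add_div, div_eq_iff huv.ne']; ring
  rwa [hc] at this

lemma concave_comb {s : Set ℝ} {g : ℝ → ℝ} (hg : ConcaveOn ℝ s g) {u v p : ℝ}
    (hu : u ∈ s) (hv : v ∈ s) (h1 : u < p) (h2 : p < v) :
    ((v - p)/(v - u)) * g u + ((p - u)/(v - u)) * g v ≤ g p := by
  have huv : (0:ℝ) < v - u := by linarith
  have ha : (0:ℝ) ≤ (v - p)/(v - u) := div_nonneg (by linarith) (by linarith)
  have hb : (0:ℝ) ≤ (p - u)/(v - u) := div_nonneg (by linarith) (by linarith)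
  have hab : (v - p)/(v - u) + (p - u)/(v - u) = 1 := by
    rw [← add_div, div_eq_one_iff_eq huv.ne']; ring
  have := hg.2 hu hv ha hb hab
  simp only [smul_eq_mul] at this
  have hc : (v - p)/(v - u) * u + (p - u)/(v - u) * v = p := by
    rw [div_mul_eq_mul_div, div_mul_eq_mul_div, ← add_div, div_eq_iff huv.ne']; ring
  rwa [hc] at this
lemma G_convexOn (α β bD bN : ℝ) (hα : 0 ≤ α) (hβ : 0 ≤ β) :
    ConvexOn ℝ (Set.Icc (1/2:ℝ) 1)
      (fun x => α / (1 + Real.exp (β * (2 * x - 1))) - (bD - bN * x)) := by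
  refine ⟨convex_Icc _ _, ?_⟩
  intro x hx y hy a b ha hb hab
  simp only [smul_eq_mul]
  have hu : β * (2 * x - 1) ∈ Set.Ici (0:ℝ) := mul_nonneg hβ (by have := hx.1; simp at this ⊢; linarith)
  have hv : β * (2 * y - 1) ∈ Set.Ici (0:ℝ) := mul_nonneg hβ (by have := hy.1; simp at this ⊢; linarith)
  have hσ := sigma_convexOn.2 hu hv ha hb hab
  simp only [smul_eq_mul] at hσ
  have harg : β * (2 * (a * x + b * y) - 1) = a * (β * (2 * x - 1)) + b * (β * (2 * y - 1)) := by
    linear_combination β * hab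
  rw [harg]
  have key := mul_le_mul_of_nonneg_left hσ hα
  have hlin : a * (bD - bN * x) + b * (bD - bN * y) = bD - bN * (a * x + b * y) := by
    linear_combination bD * hab
  rw [div_eq_mul_inv, div_eq_mul_inv, div_eq_mul_inv]
  ring_nf at key hlin ⊢
  linarith [key, hlin]

lemma G_concaveOn (α β bD bN : ℝ) (hα : 0 ≤ α) (hβ : 0 ≤ β) :
    ConcaveOn ℝ (Set.Icc (0:ℝ) (1/2))
      (fun x => α / (1 + Real.exp (β * (2 * x - 1))) - (bD - bN * x)) := by
  refine ⟨convex_Icc _ _, ?_⟩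
  intro x hx y hy a b ha hb hab
  simp only [smul_eq_mul]
  have hu : β * (2 * x - 1) ∈ Set.Iic (0:ℝ) := by
    have := hx.2; simp at this ⊢
    exact mul_nonpos_of_nonneg_of_nonpos hβ (by linarith)
  have hv : β * (2 * y - 1) ∈ Set.Iic (0:ℝ) := by
    have := hy.2; simp at this ⊢
    exact mul_nonpos_of_nonneg_of_nonpos hβ (by linarith)
  have hσ := sigma_concaveOn.2 hu hv ha hb hab
  simp only [smul_eq_mul] at hσ
  have harg : β * (2 * (a * x + b * y) - 1) = a * (β * (2 * x - 1)) + b * (β * (2 * y - 1)) := by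
    linear_combination β * hab
  rw [harg]
  have key := mul_le_mul_of_nonneg_left hσ hα
  have hlin : a * (bD - bN * x) + b * (bD - bN * y) = bD - bN * (a * x + b * y) := by
    linear_combination bD * hab
  rw [div_eq_mul_inv, div_eq_mul_inv, div_eq_mul_inv]
  ring_nf at key hlin ⊢
  linarith [key, hlin]

set_option maxHeartbeats 2000000 in
/-- Logistic dissatisfaction: unique crossing point `xhat ∈ (0,1)` of
`f(x) = α/(1+e^{β(2x-1)})` with the line `b^D - b^N x`, with deviation
profitable below `xhat` and unprofitable above. -/
theorem stmt_2 (bD bN α β : ℝ) (hDN : bD > bN) (hN : bN > 0)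
    (hαD : α > bD) (hβ : β > 0)
    (f : ℝ → ℝ) (hf : ∀ x, f x = α / (1 + Real.exp (β * (2 * x - 1))))
    (h0 : f 0 > bD) (h1 : f 1 < bD - bN) :
    ∃ xhat ∈ Set.Ioo (0:ℝ) 1,
      f xhat = bD - bN * xhat ∧
      (∀ y ∈ Set.Ioo (0:ℝ) 1, f y = bD - bN * y → y = xhat) ∧
      (∀ x ∈ Set.Ico (0:ℝ) xhat, f x > bD - bN * x) ∧
      (∀ x ∈ Set.Ioc xhat 1, f x < bD - bN * x) := by
  obtain ⟨g, gval⟩ : ∃ g : ℝ → ℝ, ∀ x, g x = f x - (bD - bN * x) := ⟨_, fun _ => rfl⟩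
  have hα0 : (0:ℝ) ≤ α := by linarith
  have hgeq : g = fun x => α / (1 + Real.exp (β * (2 * x - 1))) - (bD - bN * x) :=
    funext fun x => by rw [gval, hf]
  have hgconv : ConvexOn ℝ (Set.Icc (1/2:ℝ) 1) g := by
    rw [hgeq]; exact G_convexOn α β bD bN hα0 hβ.le
  have hgconc : ConcaveOn ℝ (Set.Icc (0:ℝ) (1/2)) g := by
    rw [hgeq]; exact G_concaveOn α β bD bN hα0 hβ.le
  have hcont : Continuous g := by
    rw [hgeq]
    exact (continuous_const.div (by continuity) (fun x => by positivity)).sub (by continuity)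
  have hg0 : 0 < g 0 := by rw [gval]; linarith
  have hg1 : g 1 < 0 := by rw [gval]; linarith
  -- key claim about g
  suffices h : ∃ z ∈ Set.Ioo (0:ℝ) 1, g z = 0 ∧
      (∀ x ∈ Set.Ico (0:ℝ) z, 0 < g x) ∧ (∀ x ∈ Set.Ioc z 1, g x < 0) by
    obtain ⟨z, hzI, hz0, hp, hn⟩ := h
    rw [gval] at hz0
    refine ⟨z, hzI, by linarith, ?_, ?_, ?_⟩
    · intro y hy hyeq
      by_contra hne
      rcases lt_or_gt_of_ne hne with hlt | hgt
      · have := hp y ⟨hy.1.le, hlt⟩; rw [gval] at this; linarith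
      · have := hn y ⟨hgt, hy.2.le⟩; rw [gval] at this; linarith
    · intro x hx; have := hp x hx; rw [gval] at this; linarith
    · intro x hx; have := hn x hx; rw [gval] at this; linarith
  have hmem0 : (0:ℝ) ∈ Set.Icc (0:ℝ) (1/2) := by norm_num
  have hmemc : (1/2:ℝ) ∈ Set.Icc (0:ℝ) (1/2) := by norm_num
  have hmemc' : (1/2:ℝ) ∈ Set.Icc (1/2:ℝ) 1 := by norm_num
  have hmem1 : (1:ℝ) ∈ Set.Icc (1/2:ℝ) 1 := by norm_num
  rcases lt_trichotomy (g (1/2)) 0 with hc | hc | hc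
  · -- crossing in (0, 1/2)
    obtain ⟨z, hzmem, hz0⟩ := intermediate_value_Icc' (by norm_num : (0:ℝ) ≤ 1/2)
      hcont.continuousOn ⟨hc.le, hg0.le⟩
    have hz0' : g z = 0 := hz0
    have hzpos : 0 < z := by
      rcases eq_or_lt_of_le hzmem.1 with h | h
      · exfalso; rw [← h] at hz0'; linarith
      · exact h
    have hzlt : z < 1/2 := by
      rcases eq_or_lt_of_le hzmem.2 with h | h
      · exfalso; rw [h] at hz0'; linarith
      · exact h
    refine ⟨z, ⟨hzpos, by linarith⟩, hz0', ?_, ?_⟩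
    · intro x ⟨hx0, hxz⟩
      rcases eq_or_lt_of_le hx0 with h | h
      · rw [← h]; exact hg0
      · have key := concave_comb hgconc hmem0 hzmem h hxz
        rw [hz0'] at key
        have ha : 0 < (z - x)/(z - 0) := div_pos (by linarith) (by linarith)
        nlinarith [mul_pos ha hg0]
    · intro x ⟨hzx, hx1⟩
      rcases le_or_gt x (1/2) with hx | hx
      · rcases eq_or_lt_of_le hx with h | h
        · rw [h]; exact hc
        · have hxmem : x ∈ Set.Icc (0:ℝ) (1/2) := ⟨by linarith, hx⟩
          have key := concave_comb hgconc hmem0 hxmem hzpos hzx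
          rw [hz0'] at key
          have ha : 0 < (x - z)/(x - 0) := div_pos (by linarith) (by linarith)
          have hb : 0 < (z - 0)/(x - 0) := div_pos (by linarith) (by linarith)
          nlinarith [mul_pos ha hg0]
      · rcases eq_or_lt_of_le hx1 with h | h
        · rw [h]; exact hg1
        · have key := convex_comb hgconv hmemc' hmem1 hx h
          have ha : 0 < (1 - x)/(1 - 1/2) := div_pos (by linarith) (by norm_num)
          have hb : 0 < (x - 1/2)/(1 - 1/2) := div_pos (by linarith) (by norm_num)
          nlinarith [mul_pos ha (show (0:ℝ) < -g (1/2) by linarith),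
            mul_pos hb (show (0:ℝ) < -g 1 by linarith)]
  · -- crossing exactly at 1/2
    refine ⟨1/2, by norm_num, hc, ?_, ?_⟩
    · intro x ⟨hx0, hxc⟩
      rcases eq_or_lt_of_le hx0 with h | h
      · rw [← h]; exact hg0
      · have key := concave_comb hgconc hmem0 hmemc h hxc
        rw [hc] at key
        have ha : 0 < (1/2 - x)/(1/2 - 0) := div_pos (by linarith) (by norm_num)
        nlinarith [mul_pos ha hg0]
    · intro x ⟨hcx, hx1⟩
      rcases eq_or_lt_of_le hx1 with h | h
      · rw [h]; exact hg1
      · have key := convex_comb hgconv hmemc' hmem1 hcx h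
        rw [hc] at key
        have hb : 0 < (x - 1/2)/(1 - 1/2) := div_pos (by linarith) (by norm_num)
        nlinarith [mul_pos hb (show (0:ℝ) < -g 1 by linarith)]
  · -- crossing in (1/2, 1)
    obtain ⟨z, hzmem, hz0⟩ := intermediate_value_Icc' (by norm_num : (1/2:ℝ) ≤ 1)
      hcont.continuousOn ⟨hg1.le, hc.le⟩
    have hz0' : g z = 0 := hz0
    have hzpos : 1/2 < z := by
      rcases eq_or_lt_of_le hzmem.1 with h | h
      · exfalso; rw [← h] at hz0'; linarith
      · exact h
    have hzlt : z < 1 := by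
      rcases eq_or_lt_of_le hzmem.2 with h | h
      · exfalso; rw [h] at hz0'; linarith
      · exact h
    refine ⟨z, ⟨by linarith, hzlt⟩, hz0', ?_, ?_⟩
    · intro x ⟨hx0, hxz⟩
      rcases le_or_gt x (1/2) with hx | hx
      · rcases eq_or_lt_of_le hx0 with h | h
        · rw [← h]; exact hg0
        · rcases eq_or_lt_of_le hx with h2 | h2
          · rw [h2]; exact hc
          · have key := concave_comb hgconc hmem0 hmemc h h2
            have ha : 0 < (1/2 - x)/(1/2 - 0) := div_pos (by linarith) (by norm_num)
            have hb : 0 ≤ (x - 0)/(1/2 - 0) := div_nonneg (by linarith) (by norm_num)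
            nlinarith [mul_pos ha hg0, mul_nonneg hb hc.le]
      · have hxmem : x ∈ Set.Icc (1/2:ℝ) 1 := ⟨hx.le, by linarith⟩
        have key := convex_comb hgconv hxmem hmem1 hxz hzlt
        rw [hz0'] at key
        have ha : 0 < (1 - z)/(1 - x) := div_pos (by linarith) (by linarith)
        have hb : 0 < (z - x)/(1 - x) := div_pos (by linarith) (by linarith)
        nlinarith [mul_pos hb (show (0:ℝ) < -g 1 by linarith), ha]
    · intro x ⟨hzx, hx1⟩
      rcases eq_or_lt_of_le hx1 with h | h
      · rw [h]; exact hg1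
      · have key := convex_comb hgconv hzmem hmem1 hzx h
        rw [hz0'] at key
        have hb : 0 < (x - z)/(1 - z) := div_pos (by linarith) (by linarith)
        nlinarith [mul_pos hb (show (0:ℝ) < -g 1 by linarith)]
end

section
/- In the symmetric continuous EV game with B > 0, any symmetric CCE distribution L with moments (γ₁, γ₂, γ₃) satisfying γ₂ + (n−1)γ₃ ≥ n γ₁² and γ₂ + (n−1)γ₃ ≤ (1/B)((R−A)γ₁ − (1/(4B))((R−A) − B(n−1)γ₁)²) must have γ₁ = (R−A)/(B(n+1)) and γ₂ + (n−1)γ₃ = n γ₁², i.e., the mean peak-time quantity equals the Nash equilibrium quantity and Var(Z_i) + (n−1)Cov(Z_i,Z_j) = 0. -/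
/-! The best-deviation bound is `n γ₁²` minus the perfect square `((R - A - B (n+1) γ₁) / (2B))²`,
so squeezing `γ₂ + (n-1) γ₃` between `n γ₁²` and that bound forces the square to vanish. -/

lemma deviation_bound_eq_sub_sq (B D m x : ℝ) (hB : B ≠ 0) :
    (1 / B) * (D * x - (1 / (4 * B)) * (D - B * (m - 1) * x) ^ 2) =
      m * x ^ 2 - ((D - B * (m + 1) * x) / (2 * B)) ^ 2 := by
  field_simp
  ring

theorem stmt_9_general (B R A : ℝ) (hB : 0 < B) (n : ℕ)
    (γ₁ γ₂ γ₃ : ℝ)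
    (hlow : n * γ₁ ^ 2 ≤ γ₂ + (n - 1 : ℝ) * γ₃)
    (hupp : γ₂ + (n - 1 : ℝ) * γ₃ ≤
      (1 / B) * ((R - A) * γ₁ - (1 / (4 * B)) * ((R - A) - B * (n - 1 : ℝ) * γ₁) ^ 2)) :
    γ₁ = (R - A) / (B * (n + 1 : ℝ)) ∧ γ₂ + (n - 1 : ℝ) * γ₃ = n * γ₁ ^ 2 := by
  rw [deviation_bound_eq_sub_sq B (R - A) n γ₁ hB.ne'] at hupp
  have hsq : ((R - A - B * (n + 1) * γ₁) / (2 * B)) ^ 2 = 0 :=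
    le_antisymm (by linarith) (sq_nonneg _)
  have hgap : R - A - B * (n + 1) * γ₁ = 0 := by simpa [hB.ne'] using hsq
  refine ⟨?_, by linarith⟩
  rw [eq_div_iff (by positivity)]
  linarith

/-- Any symmetric CCE moments `(γ₁, γ₂, γ₃)` of the symmetric continuous EV game,
squeezed between the PSD lower bound and the best-deviation upper bound, must have
mean equal to the Nash quantity and `γ₂ + (n−1)γ₃ = n γ₁²`. -/
theorem stmt_9 (B R A : ℝ) (hB : 0 < B) (n : ℕ) (hn : 1 ≤ n)
    (γ₁ γ₂ γ₃ : ℝ)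
    (hlow : n * γ₁ ^ 2 ≤ γ₂ + (n - 1 : ℝ) * γ₃)
    (hupp : γ₂ + (n - 1 : ℝ) * γ₃ ≤
      (1 / B) * ((R - A) * γ₁ - (1 / (4 * B)) * ((R - A) - B * (n - 1 : ℝ) * γ₁) ^ 2)) :
    γ₁ = (R - A) / (B * (n + 1 : ℝ)) ∧ γ₂ + (n - 1 : ℝ) * γ₃ = n * γ₁ ^ 2 :=
  stmt_9_general B R A hB n γ₁ γ₂ γ₃ hlow hupp
end
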